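/- arXiv:2509.17799 — 4 statements merged into one kernel-verified Lean document; each statement's English description precedes it below -/
import Mathlib

section
/- Let M be a finite set of m real n×n matrices. Then the stabilizability radius satisfies ρ̃(M) ≥ ρ̌(M)/m, where ρ̌ is the joint spectral subradius. -/
attribute [local instance] Matrix.frobeniusNormedAddCommGroup

/-- Trajectory of the switched system `x(t+1) = M σ(t+1) x(t)`. -/
noncomputable def trajSS {n m : ℕ} (M : Fin m → Matrix (Fin n) (Fin n) ℝ)
    (σ : ℕ → Fin m) (x : EuclideanSpace ℝ (Fin n)) : ℕ → EuclideanSpace ℝ (Fin n)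
  | 0 => x
  | t + 1 => Matrix.toEuclideanLin (M (σ (t + 1))) (trajSS M σ x t)

/-- The joint spectral subradius `ρ̌(M) = lim_T inf { ‖A‖^(1/T) : A a product of T matrices }`. -/
noncomputable def subradiusSS {n m : ℕ} (M : Fin m → Matrix (Fin n) (Fin n) ℝ) : ℝ :=
  Filter.atTop.liminf fun T : ℕ =>
    sInf {x : ℝ | ∃ w : List (Fin m), w.length = T ∧ x = ‖(w.map M).prod‖ ^ ((1 : ℝ) / T)}

/-- The stabilizability radius
`ρ̃(M) = sup_{x₀} inf { λ ≥ 0 : ∃ σ, c > 0, ‖x_σ(t)‖ ≤ c λᵗ ‖x₀‖ ∀ t }`. -/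
noncomputable def stabRadiusSS {n m : ℕ} (M : Fin m → Matrix (Fin n) (Fin n) ℝ) : ℝ :=
  ⨆ x₀ : EuclideanSpace ℝ (Fin n),
    sInf {l : ℝ | 0 ≤ l ∧ ∃ σ : ℕ → Fin m, ∃ c : ℝ, 0 < c ∧
      ∀ t : ℕ, ‖trajSS M σ x₀ t‖ ≤ c * l ^ t * ‖x₀‖}

/-!
Pick the starting point `x₀` uniformly at random in the unit cube. For a fixed nonzero matrix
`A`, the event `‖A x₀‖ ≤ δ ‖A‖` confines `x₀` to a slab of width `O(δ)` across the row of `A`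
holding its largest entry, so it has probability `O(δ)`. A union bound over the `m ^ T` products
of length `T` with `δ = c θ ^ T` gives `O((m θ) ^ T)`, so when `m θ < 1` Borel–Cantelli shows
that almost every `x₀` is shrunk this much by no nonzero product of large length, for all
rational `(c, θ)` at once. For such an `x₀`, a switching sequence with
`‖x(t)‖ ≤ c λ ^ t ‖x₀‖` and `m λ < a < ρ̌` would be a contradiction: its products eventually
have norm above `a ^ t`, so they shrink `x₀` by `c θ ^ t` whenever `λ < θ a` and `m θ < 1`.
-/

open MeasureTheory Filter Set
open scoped ENNReal

theorem MeasureTheory.Measure.pi_le_of_forall_insertNth_le {N : ℕ} {α : Type*}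
    [MeasurableSpace α] (μ : Fin (N + 1) → Measure α) [∀ i, IsProbabilityMeasure (μ i)]
    (j : Fin (N + 1)) {s : Set (Fin (N + 1) → α)} (hs : MeasurableSet s) {ε : ℝ≥0∞}
    (h : ∀ y, μ j {z | Fin.insertNth j z y ∈ s} ≤ ε) : Measure.pi μ s ≤ ε := by
  have e := measurePreserving_piFinSuccAbove μ j
  rw [← e.symm.measure_preimage hs.nullMeasurableSet,
    Measure.prod_apply_symm (e.symm.measurable hs)]
  calc _ ≤ ∫⁻ _, ε ∂(Measure.pi fun k => μ (j.succAbove k)) := lintegral_mono h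
    _ = ε := by simp

theorem Real.volume_setOf_abs_mul_add_le {a : ℝ} (ha : a ≠ 0) (b r : ℝ) :
    volume {z : ℝ | |a * z + b| ≤ r} = ENNReal.ofReal (2 * r / |a|) := by
  have hset : {z : ℝ | |a * z + b| ≤ r} = Metric.closedBall (-b / a) (r / |a|) := by
    ext z
    rw [Metric.mem_closedBall, Real.dist_eq, mem_ofPred_eq, le_div_iff₀ (abs_pos.2 ha),
      ← abs_mul, sub_mul, div_mul_cancel₀ _ ha, sub_neg_eq_add, mul_comm]
  rw [hset, Real.volume_closedBall, mul_div_assoc]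

instance : IsProbabilityMeasure (volume.restrict (Icc (0 : ℝ) 1)) := ⟨by simp⟩

noncomputable def unitCube (n : ℕ) : Measure (Fin n → ℝ) :=
  Measure.pi fun _ => volume.restrict (Icc 0 1)

instance (n : ℕ) : IsProbabilityMeasure (unitCube n) := by
  unfold unitCube; infer_instance

theorem unitCube_setOf_abs_sum_mul_le_le {n : ℕ} (v : Fin n → ℝ) {j : Fin n} (hj : v j ≠ 0)
    (r : ℝ) :
    unitCube n {y | |∑ k, v k * y k| ≤ r} ≤ ENNReal.ofReal (2 * r / |v j|) := by
  obtain ⟨N, rfl⟩ : ∃ N, n = N + 1 := Nat.exists_eq_add_one.2 j.pos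
  refine Measure.pi_le_of_forall_insertNth_le _ j ?_ fun y => ?_
  · exact measurableSet_le (by fun_prop) measurable_const
  have hslice : {z | Fin.insertNth j z y ∈ {y : Fin (N + 1) → ℝ | |∑ k, v k * y k| ≤ r}} =
      {z | |v j * z + ∑ k, v (j.succAbove k) * y k| ≤ r} := by
    ext z
    simp [Fin.sum_univ_succAbove _ j]
  rw [hslice, ← Real.volume_setOf_abs_mul_add_le hj]
  exact Measure.restrict_le_self _

theorem Matrix.exists_frobenius_norm_le_card_mul_abs_apply {ι : Type*} [Fintype ι] [Nonempty ι]
    (A : Matrix ι ι ℝ) : ∃ i j, ‖A‖ ≤ Fintype.card ι * |A i j| := by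
  obtain ⟨p, hp⟩ := Finite.exists_max fun p : ι × ι => |A p.1 p.2|
  refine ⟨p.1, p.2, ?_⟩
  have hsum : ∑ i, ∑ j, ‖A i j‖ ^ 2 ≤ (Fintype.card ι * |A p.1 p.2|) ^ 2 := by
    calc ∑ i, ∑ j, ‖A i j‖ ^ 2 ≤ ∑ _i : ι, ∑ _j : ι, |A p.1 p.2| ^ 2 := by
          gcongr with i _ j
          exact hp (i, j)
      _ = _ := by simp only [Finset.sum_const, Finset.card_univ, nsmul_eq_mul]; ring
  rw [Matrix.frobenius_norm_def, ← Real.sqrt_eq_rpow]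
  simp only [Real.rpow_two]
  exact (Real.sqrt_le_sqrt hsum).trans_eq (Real.sqrt_sq (by positivity))

section SwitchedSystem

variable {n m : ℕ}

def shrunkBy (A : Matrix (Fin n) (Fin n) ℝ) (δ : ℝ) : Set (Fin n → ℝ) :=
  {y | A ≠ 0 ∧ ‖Matrix.toEuclideanLin A (WithLp.toLp 2 y)‖ ≤ δ * ‖A‖}

theorem unitCube_shrunkBy_le (A : Matrix (Fin n) (Fin n) ℝ) {δ : ℝ} (hδ : 0 ≤ δ) :
    unitCube n (shrunkBy A δ) ≤ ENNReal.ofReal (2 * n * δ) := by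
  rcases eq_or_ne A 0 with rfl | hA
  · simp [shrunkBy]
  have : Nonempty (Fin n) := by
    by_contra h
    exact hA (Matrix.ext fun i => (not_nonempty_iff.1 h).elim i)
  obtain ⟨i, j, hij⟩ := A.exists_frobenius_norm_le_card_mul_abs_apply
  rw [Fintype.card_fin] at hij
  have hAij : 0 < |A i j| :=
    pos_of_mul_pos_right ((norm_pos_iff.2 hA).trans_le hij) n.cast_nonneg
  have hrow : ∀ y : Fin n → ℝ,
      |∑ k, A i k * y k| ≤ ‖Matrix.toEuclideanLin A (WithLp.toLp 2 y)‖ := fun y =>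
    PiLp.norm_apply_le (Matrix.toEuclideanLin A (WithLp.toLp 2 y)) i
  calc _ ≤ unitCube n {y | |∑ k, A i k * y k| ≤ δ * ‖A‖} :=
        measure_mono fun y hy => (hrow y).trans hy.2
    _ ≤ ENNReal.ofReal (2 * (δ * ‖A‖) / |A i j|) :=
        unitCube_setOf_abs_sum_mul_le_le (fun k => A i k) (abs_pos.1 hAij) _
    _ ≤ ENNReal.ofReal (2 * n * δ) := by
        gcongr
        rw [div_le_iff₀ hAij]
        nlinarith

variable (M : Fin m → Matrix (Fin n) (Fin n) ℝ)

def shrunkByProd (T : ℕ) (δ : ℝ) : Set (Fin n → ℝ) :=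
  ⋃ w : List.Vector (Fin m) T, shrunkBy (w.toList.map M).prod δ

theorem unitCube_shrunkByProd_le (T : ℕ) {δ : ℝ} (hδ : 0 ≤ δ) :
    unitCube n (shrunkByProd M T δ) ≤ m ^ T * ENNReal.ofReal (2 * n * δ) :=
  calc _ ≤ ∑ w : List.Vector (Fin m) T, unitCube n (shrunkBy (w.toList.map M).prod δ) :=
        measure_iUnion_fintype_le _ _
    _ ≤ ∑ _w : List.Vector (Fin m) T, ENNReal.ofReal (2 * n * δ) := by
        gcongr with w
        exact unitCube_shrunkBy_le _ hδ
    _ = _ := by simp [card_vector]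

theorem ae_eventually_notMem_shrunkByProd {c θ : ℝ} (hc : 0 ≤ c) (hθ : 0 ≤ θ)
    (hmθ : m * θ < 1) :
    ∀ᵐ y ∂unitCube n, ∀ᶠ T in atTop, y ∉ shrunkByProd M T (c * θ ^ T) := by
  refine ae_eventually_notMem (ne_of_lt ?_)
  have hr : (m : ℝ≥0∞) * ENNReal.ofReal θ < 1 := by
    rw [← ENNReal.ofReal_natCast, ← ENNReal.ofReal_mul (by positivity)]
    exact ENNReal.ofReal_lt_one.2 hmθ
  calc ∑' T, unitCube n (shrunkByProd M T (c * θ ^ T))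
      ≤ ∑' T, ENNReal.ofReal (2 * n * c) * (m * ENNReal.ofReal θ) ^ T := by
        gcongr with T
        refine (unitCube_shrunkByProd_le M T (by positivity)).trans_eq ?_
        rw [← mul_assoc, ENNReal.ofReal_mul (by positivity), ENNReal.ofReal_pow hθ]
        ring
    _ = ENNReal.ofReal (2 * n * c) * (1 - m * ENNReal.ofReal θ)⁻¹ := by
        rw [ENNReal.tsum_mul_left, ENNReal.tsum_geometric]
    _ < ⊤ := ENNReal.mul_lt_top ENNReal.ofReal_lt_top
        (ENNReal.inv_lt_top.2 (tsub_pos_of_lt hr))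

def IsGenericStart (y : Fin n → ℝ) : Prop :=
  ∀ (c : ℕ) (θ : ℚ), 0 ≤ θ → m * θ < 1 → ∀ᶠ T in atTop, y ∉ shrunkByProd M T (c * θ ^ T)

theorem ae_isGenericStart : ∀ᵐ y ∂unitCube n, IsGenericStart M y := by
  refine ae_all_iff.2 fun c => ae_all_iff.2 fun θ => ?_
  simp only [eventually_imp_distrib_left]
  intro hθ hmθ
  exact ae_eventually_notMem_shrunkByProd M c.cast_nonneg (by exact_mod_cast hθ)
    (by exact_mod_cast hmθ)

theorem exists_vector_trajSS_eq (σ : ℕ → Fin m) (x : EuclideanSpace ℝ (Fin n)) (t : ℕ) :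
    ∃ w : List.Vector (Fin m) t,
      trajSS M σ x t = Matrix.toEuclideanLin (w.toList.map M).prod x := by
  induction t with
  | zero => exact ⟨.nil, by simp [trajSS]⟩
  | succ t ih =>
    obtain ⟨w, hx⟩ := ih
    exact ⟨σ (t + 1) ::ᵥ w, by simp [trajSS, hx]⟩

theorem exists_norm_trajSS_le_pow :
    ∃ K : ℝ, 0 ≤ K ∧ ∀ σ x t, ‖trajSS M σ x t‖ ≤ K ^ t * ‖x‖ := by
  set K := ∑ i, ‖Matrix.toEuclideanCLM (𝕜 := ℝ) (M i)‖
  refine ⟨K, by positivity, fun σ x t => ?_⟩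
  induction t with
  | zero => simp [trajSS]
  | succ t ih =>
    calc ‖trajSS M σ x (t + 1)‖
        ≤ ‖Matrix.toEuclideanCLM (𝕜 := ℝ) (M (σ (t + 1)))‖ * ‖trajSS M σ x t‖ :=
          (Matrix.toEuclideanCLM (𝕜 := ℝ) (M (σ (t + 1)))).le_opNorm _
      _ ≤ K * (K ^ t * ‖x‖) := by
          gcongr
          exact Finset.single_le_sum (f := fun i => ‖Matrix.toEuclideanCLM (𝕜 := ℝ) (M i)‖)
            (fun i _ => norm_nonneg _) (Finset.mem_univ _)
      _ = K ^ (t + 1) * ‖x‖ := by ring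

theorem eventually_pow_lt_norm_prod {a : ℝ} (ha : 0 ≤ a) (h : a < subradiusSS M) :
    ∀ᶠ T in atTop, ∀ w : List.Vector (Fin m) T, a ^ T < ‖(w.toList.map M).prod‖ := by
  have hnonneg : ∀ T : ℕ, ∀ x ∈
      {x : ℝ | ∃ w : List (Fin m), w.length = T ∧ x = ‖(w.map M).prod‖ ^ ((1 : ℝ) / T)}, 0 ≤ x :=
    fun T => by rintro _ ⟨w, -, rfl⟩; positivity
  have hbdd := isBoundedUnder_of_eventually_ge (f := atTop)
    (.of_forall fun T => Real.sInf_nonneg (hnonneg T))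
  filter_upwards [eventually_lt_of_lt_liminf h hbdd, eventually_ge_atTop 1] with T hT hT1 w
  have hroot : a < ‖(w.toList.map M).prod‖ ^ (T : ℝ)⁻¹ :=
    hT.trans_le (csInf_le ⟨0, hnonneg T⟩ ⟨w.toList, w.toList_length, by rw [one_div]⟩)
  rw [Real.lt_rpow_inv_iff_of_pos ha (norm_nonneg _) (by positivity)] at hroot
  exact_mod_cast hroot

theorem subradiusSS_le_card_mul {y : Fin n → ℝ} (hy : IsGenericStart M y) {l : ℝ} (hl : 0 ≤ l)
    (σ : ℕ → Fin m) {c : ℝ}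
    (hσ : ∀ t, ‖trajSS M σ (WithLp.toLp 2 y) t‖ ≤ c * l ^ t * ‖WithLp.toLp 2 y‖) :
    subradiusSS M ≤ m * l := by
  set x := WithLp.toLp 2 y
  have hm : (0 : ℝ) < m := by exact_mod_cast (σ 0).pos
  by_contra! hlt
  obtain ⟨a, hla, haρ⟩ := exists_between hlt
  have ha : 0 < a := (by positivity : 0 ≤ m * l).trans_lt hla
  obtain ⟨θ, hθl, hθm⟩ : ∃ θ : ℚ, l / a < θ ∧ (θ : ℝ) < 1 / m :=
    exists_rat_btwn (by rw [div_lt_div_iff₀ ha hm]; linarith)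
  have hθ : (0 : ℝ) ≤ θ := (div_nonneg hl ha.le).trans hθl.le
  have hmθ : (m : ℚ) * θ < 1 := by
    rw [lt_div_iff₀' hm] at hθm
    exact_mod_cast hθm
  obtain ⟨T, hT, hprod⟩ := ((hy ⌈c * ‖x‖⌉₊ θ (by exact_mod_cast hθ) hmθ).and
    (eventually_pow_lt_norm_prod M ha.le haρ)).exists
  obtain ⟨w, htraj⟩ := exists_vector_trajSS_eq M σ x T
  have hA := hprod w
  refine hT (mem_iUnion.2 ⟨w, fun h => ?_, ?_⟩)
  · rw [h, norm_zero] at hA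
    exact (pow_pos ha T).not_gt hA
  · calc ‖Matrix.toEuclideanLin (w.toList.map M).prod x‖ = ‖trajSS M σ x T‖ := by rw [htraj]
      _ ≤ c * ‖x‖ * l ^ T := (hσ T).trans_eq (by ring)
      _ ≤ ⌈c * ‖x‖⌉₊ * (θ * a) ^ T := by
          gcongr
          · exact Nat.le_ceil _
          · exact ((div_lt_iff₀ ha).1 hθl).le
      _ = ⌈c * ‖x‖⌉₊ * θ ^ T * a ^ T := by ring
      _ ≤ ⌈c * ‖x‖⌉₊ * θ ^ T * ‖(w.toList.map M).prod‖ := by gcongr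

end SwitchedSystem

theorem stabRadius_ge_subradius_div_card_general {n m : ℕ} (hm : 1 ≤ m)
    (M : Fin m → Matrix (Fin n) (Fin n) ℝ) :
    subradiusSS M / m ≤ stabRadiusSS M := by
  obtain ⟨y, hy⟩ := (ae_isGenericStart M).exists
  obtain ⟨K, hK0, hK⟩ := exists_norm_trajSS_le_pow M
  have hKmem : ∀ x, K ∈ {l : ℝ | 0 ≤ l ∧ ∃ σ : ℕ → Fin m, ∃ c : ℝ, 0 < c ∧
      ∀ t : ℕ, ‖trajSS M σ x t‖ ≤ c * l ^ t * ‖x‖} :=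
    fun x => ⟨hK0, fun _ => ⟨0, hm⟩, 1, one_pos, fun t => by simpa using hK _ x t⟩
  refine le_ciSup_of_le ⟨K, ?_⟩ (WithLp.toLp 2 y) (le_csInf ⟨K, hKmem _⟩ ?_)
  · rintro _ ⟨x, rfl⟩
    exact csInf_le ⟨0, fun l hl => hl.1⟩ (hKmem x)
  · rintro l ⟨hl, σ, c, -, hσ⟩
    rw [div_le_iff₀ (by exact_mod_cast hm), mul_comm]
    exact subradiusSS_le_card_mul M hy hl σ hσ

/-- The stabilizability radius is at least the joint spectral subradius divided by the
number of matrices: `ρ̌(M)/m ≤ ρ̃(M)`. -/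
theorem stabRadius_ge_subradius_div_card {n m : ℕ} (hn : 2 ≤ n) (hm : 1 ≤ m)
    (M : Fin m → Matrix (Fin n) (Fin n) ℝ) :
    subradiusSS M / m ≤ stabRadiusSS M :=
  stabRadius_ge_subradius_div_card_general hm M
end

section
/- Let M₁ = [[2,0],[0,0]] and let R(α) = inf_{l∈ℕ} ‖lα − 1/2‖_N, where ‖x‖_N denotes the distance from x to the nearest integer. For every α ∈ (0,1) there exists l ∈ ℕ with ‖lα − 1/2‖_N ≤ 1/6, with equality attainable as infimum only when α = 1/3 or α = 2/3. -/
/-!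
Only `α = 1/3` and `α = 2/3` fail to have a multiple `lα` strictly between `k + 1/3` and
`k + 2/3` for some integer `k`, which is exactly the condition `‖lα − 1/2‖_N < 1/6`. For
`α < 1/3` the multiples of `α` step over the interval `(1/3, 2/3)` with steps shorter than its
length, so one of them lands in it; for `α > 2/3` the same applies to `1 − α`, since
`lα = l − l(1 − α)`.
-/

/-- Distance from a real number to the nearest integer. -/
noncomputable def distNearestInt (x : ℝ) : ℝ := ⨅ k : ℤ, |x - (k : ℝ)|

lemma distNearestInt_nonneg (x : ℝ) : 0 ≤ distNearestInt x :=
  le_ciInf fun _ => abs_nonneg _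

lemma distNearestInt_le_abs_sub (x : ℝ) (k : ℤ) : distNearestInt x ≤ |x - k| :=
  ciInf_le ⟨0, by rintro y ⟨k, rfl⟩; positivity⟩ k

lemma distNearestInt_sub_half_lt_of_mem_Ioo {x : ℝ} {k : ℤ}
    (hx : x ∈ Set.Ioo (k + 1 / 3 : ℝ) (k + 2 / 3)) : distNearestInt (x - 1 / 2) < 1 / 6 := by
  refine (distNearestInt_le_abs_sub _ k).trans_lt ?_
  rw [abs_lt]
  constructor <;> linarith [hx.1, hx.2]

lemma exists_nat_mul_mem_Ioo {a b β : ℝ} (ha : 0 ≤ a) (hβ : 0 < β) (hβb : β < b - a) :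
    ∃ l : ℕ, (l : ℝ) * β ∈ Set.Ioo a b := by
  refine ⟨⌊a / β⌋₊ + 1, ?_, ?_⟩
  · calc a = a / β * β := (div_mul_cancel₀ a hβ.ne').symm
      _ < (⌊a / β⌋₊ + 1 : ℕ) * β := by
        push_cast
        exact mul_lt_mul_of_pos_right (Nat.lt_floor_add_one _) hβ
  · calc ((⌊a / β⌋₊ + 1 : ℕ) : ℝ) * β ≤ (a / β + 1) * β := by
          push_cast
          gcongr
          exact Nat.floor_le (div_nonneg ha hβ.le)
      _ = a + β := by field_simp
      _ < b := by linarith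

lemma exists_distNearestInt_nat_mul_sub_half_lt {α : ℝ} (h0 : 0 < α) (h1 : α < 1)
    (h13 : α ≠ 1 / 3) (h23 : α ≠ 2 / 3) :
    ∃ l : ℕ, distNearestInt (l * α - 1 / 2) < 1 / 6 := by
  rcases h13.lt_or_gt with hlt | hgt
  · obtain ⟨l, hl⟩ := exists_nat_mul_mem_Ioo (a := 1 / 3) (b := 2 / 3) (by norm_num) h0
      (by linarith)
    exact ⟨l, distNearestInt_sub_half_lt_of_mem_Ioo (k := 0) (by simpa using hl)⟩
  rcases h23.lt_or_gt with hlt' | hgt'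
  · exact ⟨1, distNearestInt_sub_half_lt_of_mem_Ioo (k := 0) (by norm_num [hgt, hlt'])⟩
  · obtain ⟨l, hl₁, hl₂⟩ := exists_nat_mul_mem_Ioo (a := 1 / 3) (b := 2 / 3) (β := 1 - α)
      (by norm_num) (by linarith) (by linarith)
    refine ⟨l, distNearestInt_sub_half_lt_of_mem_Ioo (k := (l : ℤ) - 1) ⟨?_, ?_⟩⟩ <;>
      push_cast <;> linarith

/-- For every `α ∈ (0,1)` there is `l ∈ ℕ` with `‖lα − 1/2‖_N ≤ 1/6`, and the infimum
`inf_l ‖lα − 1/2‖_N` equals `1/6` only when `α = 1/3` or `α = 2/3`. -/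
theorem dist_half_le_sixth (α : ℝ) (hα : α ∈ Set.Ioo (0 : ℝ) 1) :
    (∃ l : ℕ, distNearestInt (l * α - 1 / 2) ≤ 1 / 6) ∧
      ((⨅ l : ℕ, distNearestInt (l * α - 1 / 2)) = 1 / 6 → α = 1 / 3 ∨ α = 2 / 3) := by
  constructor
  · by_cases hthird : α = 1 / 3 ∨ α = 2 / 3
    · refine ⟨1, (distNearestInt_le_abs_sub _ 0).trans ?_⟩
      rcases hthird with rfl | rfl <;> norm_num [abs_of_neg, abs_of_pos]
    · push Not at hthird
      obtain ⟨l, hl⟩ := exists_distNearestInt_nat_mul_sub_half_lt hα.1 hα.2 hthird.1 hthird.2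
      exact ⟨l, hl.le⟩
  · intro hinf
    by_contra hthird
    push Not at hthird
    obtain ⟨l, hl⟩ := exists_distNearestInt_nat_mul_sub_half_lt hα.1 hα.2 hthird.1 hthird.2
    have hinf_le : (⨅ l : ℕ, distNearestInt (l * α - 1 / 2)) ≤ distNearestInt (l * α - 1 / 2) :=
      ciInf_le ⟨0, by rintro y ⟨k, rfl⟩; exact distNearestInt_nonneg _⟩ l
    linarith
end

section
/- Fix β = p₀/q₀ ∈ ℚ with q₀ ≥ 1. Suppose α ∈ (0,1) has the property that for every c₁ ∈ (0,1)—in particular for c₁ = 1/2—there exist infinitely many l ∈ ℕ with 0 < ‖lα − β‖_N < c₁ˡ. Then α is a Liouville number. -/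
lemma distNearestInt_le (x : ℝ) (k : ℤ) : distNearestInt x ≤ |x - (k : ℝ)| :=
  ciInf_le ⟨0, by rintro y ⟨m, rfl⟩; positivity⟩ k

lemma distNearestInt_exists_lt {x ε : ℝ} (h : distNearestInt x < ε) :
    ∃ k : ℤ, |x - (k : ℝ)| < ε :=
  exists_lt_of_ciInf_lt h

/-- If `α ∈ (0,1)` admits, for every `c₁ ∈ (0,1)`, infinitely many `l ∈ ℕ` with
`0 < ‖lα − p₀/q₀‖_N < c₁ˡ`, then `α` is a Liouville number. -/
theorem liouville_of_exp_approx (p₀ : ℤ) (q₀ : ℕ) (hq₀ : 1 ≤ q₀)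
    (β : ℝ) (hβ : β = (p₀ : ℝ) / q₀) (α : ℝ) (hα : α ∈ Set.Ioo (0 : ℝ) 1)
    (happrox : ∀ c₁ ∈ Set.Ioo (0 : ℝ) 1,
      {l : ℕ | 0 < distNearestInt (l * α - β) ∧ distNearestInt (l * α - β) < c₁ ^ l}.Infinite) :
    Liouville α := by
  intro n
  have hS := happrox (1/2) (by norm_num)
  have hq₀R : (0:ℝ) < (q₀:ℝ) := by exact_mod_cast hq₀
  have hg : Filter.Tendsto (fun l : ℕ => (l:ℝ)^n / 2 ^ l) Filter.atTop (nhds 0) :=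
    tendsto_pow_const_div_const_pow_of_one_lt n (by norm_num)
  have hev : ∀ᶠ l : ℕ in Filter.atTop, (l:ℝ)^n / 2 ^ l < 1 / (q₀:ℝ)^n :=
    hg.eventually (gt_mem_nhds (by positivity))
  obtain ⟨N, hN⟩ := Filter.eventually_atTop.mp hev
  obtain ⟨l, hlS, hlN⟩ := hS.exists_gt (max N 2)
  have hl2 : 2 ≤ l := le_of_lt (lt_of_le_of_lt (le_max_right _ _) hlN)
  have hlN' : N ≤ l := le_of_lt (lt_of_le_of_lt (le_max_left _ _) hlN)
  have hlpos : (0:ℝ) < l := by positivity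
  obtain ⟨hd0, hdlt⟩ := hlS
  obtain ⟨k, hk⟩ := distNearestInt_exists_lt hdlt
  have hk0 : 0 < |(l:ℝ) * α - β - (k:ℝ)| := lt_of_lt_of_le hd0 (distNearestInt_le _ k)
  refine ⟨p₀ + q₀ * k, (q₀ : ℤ) * l, ?_, ?_, ?_⟩
  · have : (2:ℤ) ≤ (q₀:ℤ) * l := by
      have h1 : (1:ℤ) ≤ (q₀:ℤ) := by exact_mod_cast hq₀
      have h2 : (2:ℤ) ≤ (l:ℤ) := by exact_mod_cast hl2
      nlinarith
    linarith
  all_goals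
    have hrw : α - ((p₀ + q₀ * k : ℤ) : ℝ) / ((q₀ * l : ℤ) : ℝ)
        = ((l:ℝ) * α - β - (k:ℝ)) / l := by
      push_cast
      rw [hβ]
      field_simp
      ring
  · intro heq
    have h0 : ((l:ℝ) * α - β - (k:ℝ)) / l = 0 := by
      rw [← hrw, heq, sub_self]
    have : (l:ℝ) * α - β - (k:ℝ) = 0 := by
      rcases div_eq_zero_iff.mp h0 with h | h
      · exact h
      · exact absurd h (ne_of_gt hlpos)
    rw [this, abs_zero] at hk0
    exact lt_irrefl _ hk0
  · rw [hrw, abs_div, abs_of_pos hlpos]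
    have h2l : ((q₀:ℝ) * l)^n < 2 ^ l := by
      have := hN l hlN'
      have h2pos : (0:ℝ) < 2 ^ l := by positivity
      have hq0n : (0:ℝ) < (q₀:ℝ)^n := by positivity
      rw [div_lt_div_iff₀ h2pos hq0n] at this
      calc ((q₀:ℝ) * l)^n = (q₀:ℝ)^n * (l:ℝ)^n := by rw [mul_pow]
        _ < 2 ^ l := by nlinarith
    push_cast
    have h1 : |(l:ℝ) * α - β - (k:ℝ)| / l ≤ |(l:ℝ) * α - β - (k:ℝ)| := by
      apply div_le_self (abs_nonneg _)
      exact_mod_cast Nat.one_le_of_lt hl2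
    calc |(l:ℝ) * α - β - (k:ℝ)| / l ≤ |(l:ℝ) * α - β - (k:ℝ)| := h1
      _ < (1/2) ^ l := hk
      _ = 1 / 2 ^ l := by rw [div_pow, one_pow]
      _ < 1 / ((q₀:ℝ) * l)^n := by
          apply one_div_lt_one_div_of_lt (by positivity) h2l
end

section
/- Fix β ∈ (0,1) and c₁ ∈ (0,1). The set L of all α ∈ (0,1) such that there exist infinitely many l ∈ ℕ with ‖lα − β‖_N < c₁ˡ has Hausdorff dimension zero. -/
/-!
For each `l ≥ 1`, the `α ∈ [0, 1]` with `‖lα - β‖ < cˡ` lie in the `l + 2` balls of radius `cˡ`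
centred at `(k + β) / l`, `-1 ≤ k ≤ l`. For every `d > 0` the series `∑ₗ (l + 2) (2cˡ)ᵈ`
converges, so by the Hausdorff–Cantelli lemma the points lying in infinitely many of these
balls form a `μH[d]`-null set.
-/

open MeasureTheory Set Filter Metric
open scoped ENNReal NNReal Topology

theorem hausdorffMeasure_setOf_frequently_mem_eq_zero {X : Type*} [EMetricSpace X]
    [MeasurableSpace X] [BorelSpace X] {ι : ℕ → Type*} [∀ n, Countable (ι n)] {d : ℝ}
    (hd : 0 < d) (t : ∀ n, ι n → Set X) (ht : ∑' n, ∑' i, ediam (t n i) ^ d ≠ ∞) :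
    μH[d] {x | ∃ᶠ n in atTop, x ∈ ⋃ i, t n i} = 0 := by
  have htail : Tendsto (fun N => ∑' j, ∑' i, ediam (t (j + N) i) ^ d) atTop (𝓝 0) :=
    ENNReal.tendsto_sum_nat_add _ ht
  have hr : Tendsto (fun N => (∑' j, ∑' i, ediam (t (j + N) i) ^ d) ^ d⁻¹) atTop (𝓝 0) := by
    have := ((ENNReal.continuous_rpow_const (y := d⁻¹)).tendsto 0).comp htail
    rwa [ENNReal.zero_rpow_of_pos (inv_pos.2 hd)] at this
  have hdiam : ∀ N, ∀ p : Σ j, ι (j + N),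
      ediam (t (p.1 + N) p.2) ≤ (∑' j, ∑' i, ediam (t (j + N) i) ^ d) ^ d⁻¹ := by
    rintro N ⟨j, i⟩
    exact (ENNReal.le_rpow_inv_iff hd).2 <|
      (ENNReal.le_tsum (f := fun i => ediam (t (j + N) i) ^ d) i).trans
        (ENNReal.le_tsum (f := fun j => ∑' i, ediam (t (j + N) i) ^ d) j)
  have hcover : ∀ N, {x | ∃ᶠ n in atTop, x ∈ ⋃ i, t n i} ⊆
      ⋃ p : Σ j, ι (j + N), t (p.1 + N) p.2 := by
    intro N x hx
    obtain ⟨n, hNn, hxn⟩ := Filter.frequently_atTop.1 hx N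
    obtain ⟨i, hi⟩ := mem_iUnion.1 hxn
    obtain ⟨j, rfl⟩ := Nat.exists_eq_add_of_le' hNn
    exact mem_iUnion.2 ⟨⟨j, i⟩, hi⟩
  refine le_antisymm ?_ bot_le
  calc μH[d] {x | ∃ᶠ n in atTop, x ∈ ⋃ i, t n i}
      ≤ liminf (fun N => ∑' p : Σ j, ι (j + N), ediam (t (p.1 + N) p.2) ^ d) atTop :=
        Measure.hausdorffMeasure_le_liminf_tsum (ι := fun N => Σ j, ι (j + N)) d _ _ hr
          (fun N p => t (p.1 + N) p.2) (.of_forall hdiam) (.of_forall hcover)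
    _ = 0 := by simpa only [ENNReal.tsum_sigma'] using htail.liminf_eq

theorem dimH_eq_zero_of_forall_hausdorffMeasure_eq_zero {X : Type*} [EMetricSpace X]
    [MeasurableSpace X] [BorelSpace X] {s : Set X} (h : ∀ d : ℝ≥0, 0 < d → μH[d] s = 0) :
    dimH s = 0 := by
  refine nonpos_iff_eq_zero.1 (ENNReal.le_of_forall_pos_le_add fun d hd _ => ?_)
  rw [zero_add]
  exact dimH_le_of_hausdorffMeasure_ne_top (by simp [h d hd])

theorem summable_natCast_add_mul_geometric (a : ℝ) {r : ℝ} (hr0 : 0 ≤ r) (hr1 : r < 1) :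
    Summable fun n : ℕ => (n + a) * r ^ n := by
  simp only [add_mul]
  refine .add ?_ ((summable_geometric_of_lt_one hr0 hr1).mul_left a)
  simpa using summable_pow_mul_geometric_of_norm_lt_one 1 (by rwa [Real.norm_of_nonneg hr0])

theorem ediam_ball_le {X : Type*} [PseudoMetricSpace X] (x : X) {r : ℝ} :
    ediam (ball x r) ≤ ENNReal.ofReal (2 * r) :=
  ediam_le_of_forall_dist_le fun y hy z hz => by
    linarith [dist_triangle_right y z x, mem_ball.1 hy, mem_ball.1 hz]

theorem tsum_ediam_ball_rpow_ne_top {X : Type*} [PseudoMetricSpace X] (x : ℕ → ℤ → X)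
    {c d : ℝ} (hc0 : 0 ≤ c) (hc1 : c < 1) (hd : 0 < d) :
    ∑' l : ℕ, ∑' k : Finset.Icc (-1 : ℤ) l, ediam (ball (x l k) (c ^ l)) ^ d ≠ ∞ := by
  have hball : ∀ l k, ediam (ball (x l k) (c ^ l)) ^ d ≤ ENNReal.ofReal ((2 * c ^ l) ^ d) :=
    fun l k => by
      rw [← ENNReal.ofReal_rpow_of_nonneg (by positivity) hd.le]
      exact ENNReal.rpow_le_rpow (ediam_ball_le _) hd.le
  have hterm : ∀ l : ℕ, (2 * c ^ l) ^ d = 2 ^ d * (c ^ d) ^ l := fun l => by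
    rw [Real.mul_rpow zero_le_two (by positivity), ← Real.rpow_natCast, ← Real.rpow_natCast,
      ← Real.rpow_mul hc0, ← Real.rpow_mul hc0, mul_comm d]
  refine ne_top_of_le_ne_top (Summable.tsum_ofReal_ne_top (f := fun l : ℕ =>
    (l + 2) * (2 * c ^ l) ^ d) ?_) (ENNReal.tsum_le_tsum fun l => ?_)
  · simp only [hterm, mul_left_comm _ ((2 : ℝ) ^ d)]
    exact (summable_natCast_add_mul_geometric 2 (by positivity)
      (Real.rpow_lt_one hc0 hc1 hd)).mul_left _
  · rw [Finset.tsum_subtype (Finset.Icc (-1 : ℤ) l) fun k => ediam (ball (x l k) (c ^ l)) ^ d]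
    refine (Finset.sum_le_card_nsmul _ _ _ fun k _ => hball l k).trans_eq ?_
    rw [Int.card_Icc, show ((l : ℤ) + 1 - -1).toNat = l + 2 by omega, nsmul_eq_mul,
      ENNReal.ofReal_mul (by positivity), ENNReal.ofReal_add (by positivity) zero_le_two]
    simp

theorem exists_abs_sub_intCast_lt_of_distNearestInt_lt {x ε : ℝ} (h : distNearestInt x < ε) :
    ∃ k : ℤ, |x - k| < ε :=
  exists_lt_of_ciInf_lt h

theorem mem_iUnion_ball_of_distNearestInt_lt {l : ℕ} (hl : 0 < l) {α β ε : ℝ}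
    (hα : α ∈ Icc 0 1) (hβ : β ∈ Icc 0 1) (hε : ε ≤ 1) (h : distNearestInt (l * α - β) < ε) :
    α ∈ ⋃ k : Finset.Icc (-1 : ℤ) l, ball ((k + β) / l) ε := by
  obtain ⟨k, hk⟩ := exists_abs_sub_intCast_lt_of_distNearestInt_lt h
  have hl1 : (1 : ℝ) ≤ l := by exact_mod_cast hl
  have hlα : 0 ≤ l * α ∧ l * α ≤ l := ⟨by nlinarith [hα.1], by nlinarith [hα.2]⟩
  obtain ⟨hk_lo, hk_hi⟩ := abs_lt.1 hk
  have hk_mem : k ∈ Finset.Icc (-1 : ℤ) l := by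
    have hk₁ : ((-2 : ℤ) : ℝ) < k := by push_cast; linarith [hβ.2]
    have hk₂ : (k : ℝ) < ((l + 1 : ℤ) : ℝ) := by push_cast; linarith [hβ.1]
    rw [Int.cast_lt] at hk₁ hk₂
    exact Finset.mem_Icc.2 ⟨by omega, by omega⟩
  refine mem_iUnion.2 ⟨⟨k, hk_mem⟩, ?_⟩
  rw [mem_ball, Real.dist_eq]
  calc |α - (k + β) / l| = |l * α - β - k| / l := by
        rw [← Nat.abs_cast l, ← abs_div, Nat.abs_cast]
        congr 1
        field_simp
        ring
    _ ≤ |l * α - β - k| := div_le_self (abs_nonneg _) hl1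
    _ < ε := hk

theorem hausdorffMeasure_setOf_infinite_distNearestInt_lt_pow_eq_zero {β c d : ℝ}
    (hβ : β ∈ Icc 0 1) (hc0 : 0 ≤ c) (hc1 : c < 1) (hd : 0 < d) :
    μH[d] {α | α ∈ Icc 0 1 ∧ {l : ℕ | distNearestInt (l * α - β) < c ^ l}.Infinite} = 0 := by
  refine measure_mono_null (fun α ⟨hα, hinf⟩ => ?_) <|
    hausdorffMeasure_setOf_frequently_mem_eq_zero hd
      (fun l (k : Finset.Icc (-1 : ℤ) l) => ball ((k + β) / l) (c ^ l))
      (tsum_ediam_ball_rpow_ne_top (fun l k => (k + β) / l) hc0 hc1 hd)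
  exact ((Nat.frequently_atTop_iff_infinite.2 hinf).and_eventually (eventually_gt_atTop 0)).mono
    fun l hl => mem_iUnion_ball_of_distNearestInt_lt hl.2 hα hβ (pow_le_one₀ hc0 hc1.le) hl.1

/-- The set of `α ∈ (0,1)` admitting infinitely many `l` with `‖lα − β‖_N < c₁ˡ` has
Hausdorff dimension zero. -/
theorem dimH_exp_approx_set_eq_zero (β : ℝ) (hβ : β ∈ Set.Ioo (0 : ℝ) 1)
    (c₁ : ℝ) (hc₁ : c₁ ∈ Set.Ioo (0 : ℝ) 1) :
    dimH {α : ℝ | α ∈ Set.Ioo (0 : ℝ) 1 ∧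
      {l : ℕ | distNearestInt (l * α - β) < c₁ ^ l}.Infinite} = 0 := by
  refine dimH_eq_zero_of_forall_hausdorffMeasure_eq_zero fun d hd => measure_mono_null ?_ <|
    hausdorffMeasure_setOf_infinite_distNearestInt_lt_pow_eq_zero (Ioo_subset_Icc_self hβ)
      hc₁.1.le hc₁.2 (NNReal.coe_pos.2 hd)
  exact fun α hα => ⟨Ioo_subset_Icc_self hα.1, hα.2⟩
end
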